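/- The Gegenbauer kernel is positive semidefinite on the sphere: for every n ≥ 2, every degree i ≥ 0, and every finite collection of points x₁,…,x_k ∈ S^{n−1} and reals t₁,…,t_k, we have ∑_{a,b} t_a t_b C_i^{n/2−1}(⟨x_a, x_b⟩) ≥ 0. -/

import Mathlib

/-!
For `z` on the sphere let `Z_z(x) = ‖x‖ⁱ C_i^λ(⟨z, x⟩ / ‖x‖)`; the three-term recurrence with
`t` and `1` replaced by `⟨z, x⟩` and `‖x‖²` makes it a homogeneous polynomial of degree `i`.
When `n = 2λ + 2` it is harmonic, and `Z_z = c ⟨z, x⟩ⁱ + ‖x‖² r` with `c > 0` as soon as `λ > 0`.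
In the Fischer inner product `⟨p, q⟩ = ∑ₘ m! pₘ qₘ`, multiplication by `xⱼ` is adjoint to `∂ⱼ`,
so multiplication by `‖x‖²` is adjoint to the Laplacian and `⟨⟨y, x⟩ⁱ, q⟩ = i! q(y)` for `q`
homogeneous of degree `i` (Euler's identity). Hence `⟨Z_y, Z_z⟩ = c i! C_i^λ(⟨y, z⟩)`: up to a
positive factor the kernel is a Gram matrix. For `n = 2` we have `λ = 0`, and with this
normalization `C_i^0 = 0` for `i ≥ 1`.
-/

open Polynomial
open scoped RealInnerProductSpace

/-- The Gegenbauer (ultraspherical) polynomials `C_i^λ`, with `C₀ = 1`, `C₁ = 2λt`, and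
`i C_i(t) = 2(i+λ-1) t C_{i-1}(t) - (i+2λ-2) C_{i-2}(t)`. -/
noncomputable def gegenbauer (lam : ℝ) : ℕ → Polynomial ℝ
  | 0 => 1
  | 1 => C (2 * lam) * X
  | (i + 2) =>
      C (2 * ((i : ℝ) + 2 + lam - 1) / ((i : ℝ) + 2)) * X * gegenbauer lam (i + 1)
        - C (((i : ℝ) + 2 + 2 * lam - 2) / ((i : ℝ) + 2)) * gegenbauer lam i

namespace MvPolynomial

open Finset
open scoped Nat

variable {σ : Type*}

lemma IsHomogeneous.smul {R : Type*} [CommSemiring R] {p : MvPolynomial σ R} {d : ℕ}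
    (hp : p.IsHomogeneous d) (r : R) : (r • p).IsHomogeneous d := by
  rw [← C_mul']
  exact hp.C_mul r

lemma eval_eq_coeff_zero_of_isHomogeneous_zero {R : Type*} [CommSemiring R]
    {q : MvPolynomial σ R} (hq : q.IsHomogeneous 0) (y : σ → R) : eval y q = coeff 0 q := by
  rw [← totalDegree_zero_iff_isHomogeneous, totalDegree_eq_zero_iff_eq_C] at hq
  rw [hq, eval_C, coeff_zero_C]

variable [Fintype σ]

noncomputable def linearForm (z : σ → ℝ) : MvPolynomial σ ℝ := ∑ j, z j • X j

variable (σ) in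
noncomputable def sumSq : MvPolynomial σ ℝ := ∑ j, X j ^ 2

noncomputable def dirDeriv (z : σ → ℝ) : Derivation ℝ (MvPolynomial σ ℝ) (MvPolynomial σ ℝ) :=
  ∑ j, z j • pderiv j

noncomputable def laplacian : MvPolynomial σ ℝ →ₗ[ℝ] MvPolynomial σ ℝ :=
  ∑ j, (pderiv j).toLinearMap ∘ₗ (pderiv j).toLinearMap

lemma eval_linearForm (z x : σ → ℝ) : eval x (linearForm z) = z ⬝ᵥ x := by
  simp [linearForm, smul_eval, dotProduct]

lemma eval_sumSq (x : σ → ℝ) : eval x (sumSq σ) = x ⬝ᵥ x := by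
  simp [sumSq, dotProduct, sq]

lemma isHomogeneous_linearForm (z : σ → ℝ) : (linearForm z).IsHomogeneous 1 :=
  IsHomogeneous.sum _ _ _ fun j _ => (isHomogeneous_X ℝ j).smul _

lemma isHomogeneous_sumSq : (sumSq σ).IsHomogeneous 2 :=
  IsHomogeneous.sum _ _ _ fun j _ => isHomogeneous_X_pow j 2

lemma pderiv_linearForm (z : σ → ℝ) (j : σ) : pderiv j (linearForm z) = C (z j) := by
  classical
  simp [linearForm, pderiv_X, Pi.single_apply, C_eq_smul_one]

lemma pderiv_sumSq (j : σ) : pderiv j (sumSq σ) = 2 * X j := by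
  classical
  simp [sumSq, pderiv_X, Pi.single_apply]

lemma dirDeriv_apply (z : σ → ℝ) (p : MvPolynomial σ ℝ) :
    dirDeriv z p = ∑ j, z j • pderiv j p := by
  rw [← Derivation.coeFnAddMonoidHom_apply, dirDeriv, map_sum, Finset.sum_apply]
  rfl

lemma dirDeriv_linearForm (z w : σ → ℝ) : dirDeriv z (linearForm w) = C (z ⬝ᵥ w) := by
  simp [dirDeriv_apply, pderiv_linearForm, dotProduct, C_eq_smul_one, smul_smul]

lemma dirDeriv_sumSq (z : σ → ℝ) : dirDeriv z (sumSq σ) = 2 * linearForm z := by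
  simp [dirDeriv_apply, pderiv_sumSq, linearForm, mul_sum]

lemma laplacian_apply (p : MvPolynomial σ ℝ) : laplacian p = ∑ j, pderiv j (pderiv j p) := by
  simp [laplacian]

lemma laplacian_mul (p q : MvPolynomial σ ℝ) :
    laplacian (p * q) = laplacian p * q + 2 * ∑ j, pderiv j p * pderiv j q + p * laplacian q := by
  simp only [laplacian_apply, pderiv_mul, map_add, sum_add_distrib, sum_mul, mul_sum, two_mul]
  ring

lemma laplacian_linearForm_mul (z : σ → ℝ) (p : MvPolynomial σ ℝ) :
    laplacian (linearForm z * p) = linearForm z * laplacian p + 2 * dirDeriv z p := by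
  rw [laplacian_mul]
  simp only [laplacian_apply, pderiv_linearForm, dirDeriv_apply, pderiv_C, sum_const_zero,
    zero_mul, zero_add, C_mul']
  exact add_comm _ _

lemma laplacian_sumSq_mul {p : MvPolynomial σ ℝ} {d : ℕ} (hp : p.IsHomogeneous d) :
    laplacian (sumSq σ * p)
      = sumSq σ * laplacian p + (2 * Fintype.card σ + 4 * d : ℝ) • p := by
  have two_X : ∀ j, pderiv j (2 * X j : MvPolynomial σ ℝ) = 2 := fun j => by
    rw [two_mul, map_add, pderiv_X_self, one_add_one_eq_two]
  rw [laplacian_mul]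
  simp only [laplacian_apply, pderiv_sumSq, two_X, sum_const, Finset.card_univ, mul_assoc,
    ← mul_sum, hp.sum_X_mul_pderiv, smul_eq_C_mul, nsmul_eq_mul, map_add, map_mul, map_natCast,
    map_ofNat]
  ring

noncomputable def factorialWeight (m : σ →₀ ℕ) : ℝ := ∏ j, ((m j)! : ℝ)

lemma factorialWeight_pos (m : σ →₀ ℕ) : 0 < factorialWeight m :=
  prod_pos fun j _ => mod_cast Nat.factorial_pos (m j)

@[simp]
lemma factorialWeight_zero : factorialWeight (0 : σ →₀ ℕ) = 1 := by
  simp [factorialWeight]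

lemma factorialWeight_add_single (m : σ →₀ ℕ) (j : σ) :
    factorialWeight (m + Finsupp.single j 1) = factorialWeight m * (m j + 1) := by
  classical
  have h : ∀ k, (((m + Finsupp.single j 1 : σ →₀ ℕ) k)! : ℝ)
      = (m k)! * if k = j then (m j + 1 : ℝ) else 1 := by
    intro k
    by_cases hk : k = j
    · subst hk; simp [Nat.factorial_succ, mul_comm]
    · simp [hk]
  simp only [factorialWeight, h, prod_mul_distrib, prod_ite_eq', mem_univ, if_true]

lemma sum_factorialWeight_eq_of_support_subset {p : MvPolynomial σ ℝ} {s : Finset (σ →₀ ℕ)}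
    (h : p.support ⊆ s) (q : MvPolynomial σ ℝ) :
    ∑ m ∈ p.support, factorialWeight m * coeff m p * coeff m q
      = ∑ m ∈ s, factorialWeight m * coeff m p * coeff m q :=
  sum_subset h fun m _ hm => by rw [notMem_support_iff.mp hm]; ring

noncomputable def fischer : LinearMap.BilinForm ℝ (MvPolynomial σ ℝ) :=
  LinearMap.mk₂ ℝ (fun p q => ∑ m ∈ p.support, factorialWeight m * coeff m p * coeff m q)
    (fun p₁ p₂ q => by
      classical
      rw [sum_factorialWeight_eq_of_support_subset support_add,
        sum_factorialWeight_eq_of_support_subset (subset_union_left (s₂ := p₂.support)),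
        sum_factorialWeight_eq_of_support_subset (subset_union_right (s₁ := p₁.support)),
        ← sum_add_distrib]
      exact sum_congr rfl fun _ _ => by rw [coeff_add]; ring)
    (fun c p q => by
      rw [sum_factorialWeight_eq_of_support_subset (support_smul (a := c) (f := p)), smul_eq_mul,
        mul_sum]
      exact sum_congr rfl fun _ _ => by rw [coeff_smul, smul_eq_mul]; ring)
    (fun p q₁ q₂ => by simp only [coeff_add, mul_add, sum_add_distrib])
    (fun c p q => by
      simp only [coeff_smul, smul_eq_mul, mul_sum]
      exact sum_congr rfl fun _ _ => by ring)

lemma fischer_apply (p q : MvPolynomial σ ℝ) :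
    fischer p q = ∑ m ∈ p.support, factorialWeight m * coeff m p * coeff m q := rfl

lemma fischer_self_nonneg (p : MvPolynomial σ ℝ) : 0 ≤ fischer p p :=
  sum_nonneg fun m _ => by
    rw [mul_assoc]
    exact mul_nonneg (factorialWeight_pos m).le (mul_self_nonneg _)

lemma fischer_one_left (q : MvPolynomial σ ℝ) : fischer 1 q = coeff 0 q := by
  classical
  rw [fischer_apply, sum_factorialWeight_eq_of_support_subset support_one.subset]
  simp

lemma fischer_X_mul (j : σ) (p q : MvPolynomial σ ℝ) :
    fischer (X j * p) q = fischer p (pderiv j q) := by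
  simp only [fischer_apply, support_X_mul, sum_map, addLeftEmbedding_apply, coeff_X_mul]
  refine sum_congr rfl fun m _ => ?_
  rw [coeff_pderiv, add_comm, factorialWeight_add_single]
  ring

lemma fischer_sumSq_mul (p q : MvPolynomial σ ℝ) :
    fischer (sumSq σ * p) q = fischer p (laplacian q) := by
  simp only [sumSq, sum_mul, map_sum, LinearMap.sum_apply, laplacian_apply, sq, mul_assoc,
    fischer_X_mul]

lemma fischer_linearForm_pow (y : σ → ℝ) {i : ℕ} {q : MvPolynomial σ ℝ}
    (hq : q.IsHomogeneous i) : fischer (linearForm y ^ i) q = i ! * eval y q := by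
  induction i generalizing q with
  | zero => rw [pow_zero, fischer_one_left, eval_eq_coeff_zero_of_isHomogeneous_zero hq]; simp
  | succ i ih =>
    have expand : linearForm y ^ (i + 1) = ∑ j, y j • (X j * linearForm y ^ i) := by
      rw [pow_succ', linearForm, sum_mul]
      simp only [smul_mul_assoc]
    have euler := congrArg (eval y) hq.sum_X_mul_pderiv
    simp only [map_sum, map_mul, eval_X, nsmul_eq_mul, map_natCast] at euler
    simp only [expand, map_sum, map_smul, LinearMap.sum_apply, LinearMap.smul_apply,
      fischer_X_mul, ih hq.pderiv, smul_eq_mul]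
    rw [Nat.factorial_succ, Nat.cast_mul, mul_comm ((i + 1 : ℕ) : ℝ), mul_assoc, ← euler, mul_sum]
    exact sum_congr rfl fun _ _ => by ring

end MvPolynomial

lemma gegenbauer_zero_add_one : ∀ i, gegenbauer 0 (i + 1) = 0
  | 0 => by simp [gegenbauer]
  | 1 => by simp [gegenbauer]
  | i + 2 => by
    rw [gegenbauer, gegenbauer_zero_add_one i, gegenbauer_zero_add_one (i + 1)]
    simp

lemma sum_mul_gegenbauer_zero_nonneg {ι : Type*} [Fintype ι] (i : ℕ) (s : ι → ι → ℝ)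
    (t : ι → ℝ) : 0 ≤ ∑ a, ∑ b, t a * t b * (gegenbauer 0 i).eval (s a b) := by
  cases i with
  | zero =>
    simp only [gegenbauer, Polynomial.eval_one, mul_one, ← Finset.sum_mul_sum]
    exact mul_self_nonneg _
  | succ i => simp [gegenbauer_zero_add_one]

namespace Gegenbauer

open MvPolynomial Finset
open scoped Nat

variable {σ : Type*} [Fintype σ]

/-- The polynomial `x ↦ ‖x‖ⁱ C_i^λ(⟨z, x⟩ / ‖x‖)`. -/
noncomputable def zonal (lam : ℝ) (z : σ → ℝ) : ℕ → MvPolynomial σ ℝ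
  | 0 => 1
  | 1 => (2 * lam) • linearForm z
  | i + 2 =>
      (2 * ((i : ℝ) + 2 + lam - 1) / ((i : ℝ) + 2)) • (linearForm z * zonal lam z (i + 1))
        - (((i : ℝ) + 2 + 2 * lam - 2) / ((i : ℝ) + 2)) • (sumSq σ * zonal lam z i)

variable (lam : ℝ) (z : σ → ℝ)

lemma eval_zonal {x : σ → ℝ} (hx : x ⬝ᵥ x = 1) :
    ∀ i, MvPolynomial.eval x (zonal lam z i) = (gegenbauer lam i).eval (z ⬝ᵥ x)
  | 0 => by simp [zonal, gegenbauer]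
  | 1 => by simp [zonal, gegenbauer, eval_linearForm, MvPolynomial.smul_eval]
  | i + 2 => by
    simp only [zonal, gegenbauer, map_sub, MvPolynomial.smul_eval, map_mul, eval_linearForm,
      eval_sumSq, hx, eval_zonal hx i, eval_zonal hx (i + 1), Polynomial.eval_sub,
      Polynomial.eval_mul, Polynomial.eval_C, Polynomial.eval_X]
    ring

lemma isHomogeneous_zonal : ∀ i, (zonal lam z i).IsHomogeneous i
  | 0 => isHomogeneous_one _ _
  | 1 => (isHomogeneous_linearForm z).smul _
  | i + 2 => by
    refine IsHomogeneous.sub (IsHomogeneous.smul ?_ _) (IsHomogeneous.smul ?_ _)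
    · exact (add_comm 1 (i + 1)) ▸ (isHomogeneous_linearForm z).mul (isHomogeneous_zonal (i + 1))
    · exact (add_comm 2 i) ▸ isHomogeneous_sumSq.mul (isHomogeneous_zonal i)

lemma add_two_smul_zonal (i : ℕ) :
    ((i : ℝ) + 2) • zonal lam z (i + 2)
      = (2 * ((i : ℝ) + 1 + lam)) • (linearForm z * zonal lam z (i + 1))
        - ((i : ℝ) + 2 * lam) • (sumSq σ * zonal lam z i) := by
  have hi : (i : ℝ) + 2 ≠ 0 := by positivity
  rw [zonal, smul_sub, smul_smul, smul_smul]
  congr 2 <;> field_simp <;> ring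

variable {z}

/-- The second identity is only carried along: it is what closes the induction for the first. -/
lemma dirDeriv_zonal (hz : z ⬝ᵥ z = 1) (i : ℕ) :
    dirDeriv z (zonal lam z (i + 1)) = ((i : ℝ) + 2 * lam) • zonal lam z i
      ∧ sumSq σ * dirDeriv z (zonal lam z i)
        = (2 * ((i : ℝ) + lam)) • (linearForm z * zonal lam z i)
          - ((i : ℝ) + 1) • zonal lam z (i + 1) := by
  induction i with
  | zero => simp [zonal, dirDeriv_linearForm, hz]
  | succ i ih =>
    obtain ⟨hD, hQD⟩ := ih
    have hrec := add_two_smul_zonal lam z i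
    have hi : (i : ℝ) + 2 ≠ 0 := by positivity
    constructor
    · have h := congrArg (dirDeriv z) hrec
      simp only [Derivation.map_smul, map_sub, Derivation.leibniz, dirDeriv_linearForm,
        dirDeriv_sumSq, hz, hD, smul_eq_mul, MvPolynomial.C_1, mul_one, mul_smul_comm] at h
      apply smul_right_injective _ hi
      dsimp only
      rw [h]
      push_cast
      linear_combination (norm := skip) (-((i : ℝ) + 2 * lam)) • hQD
      simp only [MvPolynomial.smul_eq_C_mul, map_add, map_mul, map_neg, map_natCast, map_ofNat,
        map_one]
      ring
    · rw [hD, mul_smul_comm]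
      push_cast
      linear_combination (norm := module) hrec

lemma laplacian_zonal (hz : z ⬝ᵥ z = 1) (hcard : (Fintype.card σ : ℝ) = 2 * lam + 2) :
    ∀ i, laplacian (zonal lam z i) = 0
  | 0 => by simp [zonal, laplacian_apply]
  | 1 => by simp [zonal, laplacian_apply, pderiv_linearForm]
  | i + 2 => by
    have h := congrArg laplacian (add_two_smul_zonal lam z i)
    simp only [map_smul, map_sub, laplacian_linearForm_mul, laplacian_sumSq_mul
      (isHomogeneous_zonal lam z i), laplacian_zonal hz hcard i, laplacian_zonal hz hcard (i + 1),
      (dirDeriv_zonal lam hz i).1, hcard, mul_zero, zero_add, two_mul] at h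
    have hi : (i : ℝ) + 2 ≠ 0 := by positivity
    apply smul_right_injective _ hi
    simp only [h, smul_zero]
    module

variable {lam}

lemma exists_zonal_eq_smul_pow_add (hlam : 0 < lam) :
    ∀ i, ∃ c : ℝ, 0 < c ∧ ∀ z : σ → ℝ, ∃ r, zonal lam z i = c • linearForm z ^ i + sumSq σ * r
  | 0 => ⟨1, one_pos, fun z => ⟨0, by simp [zonal]⟩⟩
  | 1 => ⟨2 * lam, by positivity, fun z => ⟨0, by simp [zonal]⟩⟩
  | i + 2 => by
    obtain ⟨c, hc, hr⟩ := exists_zonal_eq_smul_pow_add hlam (i + 1)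
    have ha : 0 < 2 * ((i : ℝ) + 2 + lam - 1) / ((i : ℝ) + 2) := by
      apply div_pos <;> linarith [(Nat.cast_nonneg i : (0 : ℝ) ≤ i)]
    refine ⟨_, mul_pos ha hc, fun z => ?_⟩
    obtain ⟨r, hr⟩ := hr z
    refine ⟨(2 * ((i : ℝ) + 2 + lam - 1) / ((i : ℝ) + 2)) • (linearForm z * r)
      - (((i : ℝ) + 2 + 2 * lam - 2) / ((i : ℝ) + 2)) • zonal lam z i, ?_⟩
    rw [zonal, hr, pow_succ' _ (i + 1)]
    simp only [mul_add, mul_sub, mul_smul_comm, smul_add, smul_smul,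
      mul_left_comm (linearForm z) (sumSq σ)]
    module

lemma exists_fischer_zonal (hlam : 0 < lam) (hcard : (Fintype.card σ : ℝ) = 2 * lam + 2)
    (i : ℕ) : ∃ c : ℝ, 0 < c ∧ ∀ y z : σ → ℝ, y ⬝ᵥ y = 1 → z ⬝ᵥ z = 1 →
      fischer (zonal lam y i) (zonal lam z i) = c * (gegenbauer lam i).eval (y ⬝ᵥ z) := by
  obtain ⟨c, hc, hdecomp⟩ := exists_zonal_eq_smul_pow_add (σ := σ) hlam i
  refine ⟨c * i !, by positivity, fun y z hy hz => ?_⟩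
  obtain ⟨r, hr⟩ := hdecomp y
  rw [hr, map_add, LinearMap.add_apply, fischer_sumSq_mul, laplacian_zonal lam hz hcard,
    map_zero, add_zero, map_smul, LinearMap.smul_apply, smul_eq_mul,
    fischer_linearForm_pow y (isHomogeneous_zonal lam z i), eval_zonal lam z hy, dotProduct_comm,
    mul_assoc]

theorem sum_mul_gegenbauer_dotProduct_nonneg {ι : Type*} [Fintype ι] (hlam : 0 < lam)
    (hcard : (Fintype.card σ : ℝ) = 2 * lam + 2) (i : ℕ) (x : ι → σ → ℝ)
    (hx : ∀ a, x a ⬝ᵥ x a = 1) (t : ι → ℝ) :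
    0 ≤ ∑ a, ∑ b, t a * t b * (gegenbauer lam i).eval (x a ⬝ᵥ x b) := by
  obtain ⟨c, hc, hfischer⟩ := exists_fischer_zonal hlam hcard i
  have hgram a b := hfischer (x a) (x b) (hx a) (hx b)
  set S := ∑ a, t a • zonal lam (x a) i
  have hS : fischer S S = c * ∑ a, ∑ b, t a * t b * (gegenbauer lam i).eval (x a ⬝ᵥ x b) := by
    simp only [S, map_sum, map_smul, LinearMap.sum_apply, LinearMap.smul_apply, smul_eq_mul,
      hgram, mul_sum]
    rw [sum_comm]
    exact sum_congr rfl fun _ _ => sum_congr rfl fun _ _ => by ring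
  exact nonneg_of_mul_nonneg_right (hS ▸ fischer_self_nonneg S) hc

end Gegenbauer

/-- The Gegenbauer kernel is positive semidefinite on the sphere: for unit vectors
`x₁, …, x_k` in `ℝⁿ` and reals `t₁, …, t_k`,
`∑_{a,b} t_a t_b C_i^{n/2-1}(⟨x_a, x_b⟩) ≥ 0`. -/
theorem stmt_12 (n : ℕ) (hn : 2 ≤ n) (i : ℕ) (k : ℕ)
    (x : Fin k → EuclideanSpace ℝ (Fin n)) (hx : ∀ a, ‖x a‖ = 1) (t : Fin k → ℝ) :
    0 ≤ ∑ a, ∑ b, t a * t b * (gegenbauer ((n : ℝ) / 2 - 1) i).eval ⟪x a, x b⟫ := by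
  have hinner a b : ⟪x a, x b⟫ = (x a).ofLp ⬝ᵥ (x b).ofLp := by
    rw [EuclideanSpace.inner_eq_star_dotProduct, star_trivial, dotProduct_comm]
  have hunit a : (x a).ofLp ⬝ᵥ (x a).ofLp = 1 := by
    rw [← hinner, real_inner_self_eq_norm_sq, hx, one_pow]
  rcases hn.eq_or_lt with rfl | hn3
  · rw [show ((2 : ℕ) : ℝ) / 2 - 1 = 0 by norm_num]
    exact sum_mul_gegenbauer_zero_nonneg i _ t
  · have hlam : 0 < (n : ℝ) / 2 - 1 := by
      have : (3 : ℝ) ≤ n := mod_cast hn3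
      linarith
    simp only [hinner]
    exact Gegenbauer.sum_mul_gegenbauer_dotProduct_nonneg hlam (by simp; ring) i _ hunit t
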